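/- arXiv:2111.11857 — 2 statements merged into one kernel-verified Lean document; each statement's English description precedes it below -/
import Mathlib

section
/- For |q|<1 and z real, θ₁(z,q) = 2q^{1/4} sin(z) ∏_{n≥1}(1−q^{2n})(1−2q^{2n}cos(2z)+q^{4n}). -/
open Real
open Filter Finset Topology

noncomputable section
namespace JTP

def E (r : ℝ) (n : ℕ) : ℝ := ∏ j ∈ Finset.range n, (1 - r ^ (j + 1))

variable {r : ℝ}

@[simp] lemma E_zero : E r 0 = 1 := by simp [E]
lemma E_succ (n : ℕ) : E r (n + 1) = E r n * (1 - r ^ (n + 1)) := Finset.prod_range_succ _ _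
lemma E_one : E r 1 = 1 - r := by rw [show (1:ℕ) = 0 + 1 from rfl, E_succ]; simp
lemma factor_pos (hr0 : 0 ≤ r) (hr1 : r < 1) (n : ℕ) : 0 < 1 - r ^ (n + 1) := by
  have : r ^ (n + 1) < 1 := pow_lt_one₀ hr0 hr1 (Nat.succ_ne_zero n)
  linarith
lemma E_pos (hr0 : 0 ≤ r) (hr1 : r < 1) (n : ℕ) : 0 < E r n :=
  Finset.prod_pos fun j _ => factor_pos hr0 hr1 j
lemma E_ne_zero (hr0 : 0 ≤ r) (hr1 : r < 1) (n : ℕ) : E r n ≠ 0 := (E_pos hr0 hr1 n).ne'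

/-- Gaussian-binomial-like coefficient. -/
def B (r : ℝ) (m : ℕ) (t : ℤ) : ℝ :=
  if 0 ≤ t ∧ t ≤ (m : ℤ) then E r m / (E r t.toNat * E r (m - t.toNat)) else 0

lemma B_neg {m : ℕ} {t : ℤ} (h : t < 0) : B r m t = 0 := by
  rw [B, if_neg]; rintro ⟨h0, -⟩; omega

lemma B_gt {m : ℕ} {t : ℤ} (h : (m : ℤ) < t) : B r m t = 0 := by
  rw [B, if_neg]; rintro ⟨-, h0⟩; omega

lemma B_eval (m a b : ℕ) (h : m = a + b) :
    B r m (a : ℤ) = E r m / (E r a * E r b) := by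
  subst h
  rw [B, if_pos ⟨Int.ofNat_nonneg a, by omega⟩]
  simp only [Int.toNat_natCast]
  have : a + b - a = b := by omega
  rw [this]

lemma B_zero_left (hr0 : 0 ≤ r) (hr1 : r < 1) (m : ℕ) : B r m 0 = 1 := by
  have := B_eval (r := r) m 0 m (by omega)
  simpa [E_ne_zero hr0 hr1 m] using this

lemma B_self (hr0 : 0 ≤ r) (hr1 : r < 1) (m : ℕ) : B r m (m : ℤ) = 1 := by
  have := B_eval (r := r) m m 0 (by omega)
  simpa [E_ne_zero hr0 hr1 m] using this

lemma B_nonneg (hr0 : 0 ≤ r) (hr1 : r < 1) (m : ℕ) (t : ℤ) : 0 ≤ B r m t := by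
  rw [B]
  split
  · have ha := E_pos hr0 hr1 m
    have hb := E_pos hr0 hr1 t.toNat
    have hc := E_pos hr0 hr1 (m - t.toNat)
    positivity
  · exact le_rfl

/-- The core algebraic identity (generic interior case). -/
lemma B_core (hr0 : 0 < r) (hr1 : r < 1) (i l : ℕ) :
    E r (i+l+4) / (E r (i+2) * E r (l+2)) =
      (1 + r^(i+l+3)) * (E r (i+l+2) / (E r (i+1) * E r (l+1)))
      + r^(l+2) * (E r (i+l+2) / (E r i * E r (l+2)))
      + r^(i+2) * (E r (i+l+2) / (E r (i+2) * E r l)) := by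
  have e4 : E r (i+l+4) = E r (i+l+2) * (1 - r^(i+l+3)) * (1 - r^(i+l+4)) := by
    rw [show i+l+4 = (i+l+3)+1 from rfl, E_succ, show i+l+3 = (i+l+2)+1 from rfl, E_succ]
  have ei2 : E r (i+2) = E r i * (1 - r^(i+1)) * (1 - r^(i+2)) := by
    rw [show i+2 = (i+1)+1 from rfl, E_succ, E_succ]
  have el2 : E r (l+2) = E r l * (1 - r^(l+1)) * (1 - r^(l+2)) := by
    rw [show l+2 = (l+1)+1 from rfl, E_succ, E_succ]
  have ei1 : E r (i+1) = E r i * (1 - r^(i+1)) := E_succ i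
  have el1 : E r (l+1) = E r l * (1 - r^(l+1)) := E_succ l
  have h1 := E_ne_zero hr0.le hr1 i
  have h2 := E_ne_zero hr0.le hr1 l
  have h3 := E_ne_zero hr0.le hr1 (i+l+2)
  have f1 := (factor_pos hr0.le hr1 i).ne'
  have f2 := (factor_pos hr0.le hr1 (i+1)).ne'
  have f3 := (factor_pos hr0.le hr1 l).ne'
  have f4 := (factor_pos hr0.le hr1 (l+1)).ne'
  rw [e4, ei2, el2, ei1, el1]
  field_simp
  ring
end JTP

namespace JTP
variable {r : ℝ}

lemma B_one_case (hr0 : 0 < r) (hr1 : r < 1) (N : ℕ) :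
    B r (2*N+2) 1 = (1 + r^(2*N+1)) + r * B r (2*N) 1 := by
  have h1 := E_ne_zero hr0.le hr1
  have h0 : (1:ℝ) - r ≠ 0 := by have := (factor_pos hr0.le hr1 0).ne'; simpa using this
  rcases N with _ | M
  · have hL : B r 2 1 = E r 2 / (E r 1 * E r 1) := by
      have := B_eval (r := r) 2 1 1 (by omega)
      simpa using this
    have hR : B r 0 1 = 0 := B_gt (by norm_num)
    rw [hL, hR, show (2:ℕ) = 1 + 1 from rfl, E_succ, E_one]
    rw [div_eq_iff (mul_ne_zero h0 h0)]
    ring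
  · have hL : B r (2*(M+1)+2) 1 = E r (2*M+4) / (E r 1 * E r (2*M+3)) := by
      have := B_eval (r := r) (2*M+4) 1 (2*M+3) (by omega)
      rw [show 2*(M+1)+2 = 2*M+4 by omega]
      simpa using this
    have hR : B r (2*(M+1)) 1 = E r (2*M+2) / (E r 1 * E r (2*M+1)) := by
      have := B_eval (r := r) (2*M+2) 1 (2*M+1) (by omega)
      rw [show 2*(M+1) = 2*M+2 by omega]
      simpa using this
    have c1 : E r (2*M+4) / (E r 1 * E r (2*M+3)) = (1 - r^(2*M+4)) / (1 - r) := by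
      rw [show 2*M+4 = (2*M+3)+1 from rfl, E_succ, E_one,
        div_eq_div_iff (mul_ne_zero h0 (h1 _)) h0]
      ring
    have c2 : E r (2*M+2) / (E r 1 * E r (2*M+1)) = (1 - r^(2*M+2)) / (1 - r) := by
      rw [show 2*M+2 = (2*M+1)+1 from rfl, E_succ, E_one,
        div_eq_div_iff (mul_ne_zero h0 (h1 _)) h0]
      ring
    rw [hL, hR, c1, c2, show 2*(M+1)+1 = 2*M+3 by omega]
    field_simp
    ring

/-- The key recurrence for the coefficients. -/
lemma B_step (hr0 : 0 < r) (hr1 : r < 1) (N : ℕ) (t : ℤ) :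
    B r (2*N+2) (t+N+1) = (1 + r^(2*N+1)) * B r (2*N) (t+N)
      + r ^ ((N:ℤ)+1-t) * B r (2*N) (t+N-1)
      + r ^ ((N:ℤ)+1+t) * B r (2*N) (t+N+1) := by
  rcases lt_trichotomy (t + (N:ℤ) + 1) 0 with hlo | heq0 | hpos
  · rw [B_neg hlo, B_neg (show t+(N:ℤ) < 0 by omega),
      B_neg (show t+(N:ℤ)-1 < 0 by omega), B_neg (show t+(N:ℤ)+1 < 0 by omega)]
    ring
  · -- t = -(N+1)
    rw [heq0, B_zero_left hr0.le hr1, B_zero_left hr0.le hr1,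
      B_neg (show t+(N:ℤ) < 0 by omega), B_neg (show t+(N:ℤ)-1 < 0 by omega),
      show (N:ℤ)+1+t = 0 by omega, zpow_zero]
    ring
  · rcases lt_trichotomy (t + (N:ℤ) + 1) (2*N+2) with hmid | heqtop | hhi
    · rcases eq_or_lt_of_le (by omega : (1:ℤ) ≤ t + N + 1) with h1eq | h2le
      · -- t = -N
        rw [← h1eq, show t+(N:ℤ) = 0 by omega, B_zero_left hr0.le hr1,
          B_neg (show (0:ℤ)-1 < 0 by norm_num),
          show (N:ℤ)+1+t = 1 by omega, zpow_one, B_one_case hr0 hr1 N]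
        ring
      · rcases eq_or_lt_of_le (by omega : t + (N:ℤ) + 1 ≤ 2*N+1) with htopm | hlt
        · -- t = N
          have hcast : t + (N:ℤ) + 1 = ((2*N+1 : ℕ) : ℤ) := by push_cast; omega
          have hL : B r (2*N+2) (t+N+1) = E r (2*N+2) / (E r (2*N+1) * E r 1) := by
            rw [hcast]; exact B_eval _ _ _ (by omega)
          have hb0 : B r (2*N) (t+N) = 1 := by
            rw [show t+(N:ℤ) = ((2*N : ℕ) : ℤ) by push_cast; omega]
            exact B_self hr0.le hr1 _
          have hb2 : B r (2*N) (t+N+1) = 0 := B_gt (by push_cast; omega)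
          rcases N with _ | M
          · exact absurd htopm (by omega)
          · have hb1 : B r (2*(M+1)) (t + ((M+1:ℕ):ℤ) - 1)
                = E r (2*M+2) / (E r (2*M+1) * E r 1) := by
              rw [show t + ((M+1:ℕ):ℤ) - 1 = ((2*M+1 : ℕ) : ℤ) by push_cast; omega,
                show 2*(M+1) = 2*M+2 by omega]
              exact B_eval _ _ _ (by omega)
            rw [hL, hb0, hb1, hb2, show ((M+1:ℕ):ℤ)+1-t = 1 by push_cast; omega, zpow_one]
            have h1 := E_ne_zero hr0.le hr1
            have h0 : (1:ℝ) - r ≠ 0 := by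
              have := (factor_pos hr0.le hr1 0).ne'; simpa using this
            have c1 : E r (2*(M+1)+2) / (E r (2*(M+1)+1) * E r 1)
                = (1 - r^(2*M+4)) / (1 - r) := by
              rw [show 2*(M+1)+1 = 2*M+3 by omega, show 2*(M+1)+2 = (2*M+3)+1 by omega,
                E_succ, E_one, div_eq_div_iff (mul_ne_zero (h1 _) h0) h0]
              ring
            have c2 : E r (2*M+2) / (E r (2*M+1) * E r 1) = (1 - r^(2*M+2)) / (1 - r) := by
              rw [show 2*M+2 = (2*M+1)+1 from rfl, E_succ, E_one,
                div_eq_div_iff (mul_ne_zero (h1 _) h0) h0]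
              ring
            rw [c1, c2, show 2*(M+1)+1 = 2*M+3 by omega]
            field_simp
            ring
        · -- generic interior
          obtain ⟨i, hi⟩ := Int.eq_ofNat_of_zero_le (by omega : (0:ℤ) ≤ t + N - 1)
          obtain ⟨l, hl⟩ := Int.eq_ofNat_of_zero_le (by omega : (0:ℤ) ≤ 2*(N:ℤ) - (t+N+1))
          have hNil : 2*N+2 = (i+2) + (l+2) := by omega
          have e1 : B r (2*N+2) (t+N+1) = E r (2*N+2) / (E r (i+2) * E r (l+2)) := by
            rw [show t + (N:ℤ) + 1 = ((i+2 : ℕ) : ℤ) by push_cast; omega]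
            exact B_eval _ _ _ hNil
          have e2 : B r (2*N) (t+N) = E r (2*N) / (E r (i+1) * E r (l+1)) := by
            rw [show t + (N:ℤ) = ((i+1 : ℕ) : ℤ) by push_cast; omega]
            exact B_eval _ _ _ (by omega)
          have e3 : B r (2*N) (t+N-1) = E r (2*N) / (E r i * E r (l+2)) := by
            rw [show t + (N:ℤ) - 1 = ((i : ℕ) : ℤ) by push_cast; omega]
            exact B_eval _ _ _ (by omega)
          have e4 : B r (2*N) (t+N+1) = E r (2*N) / (E r (i+2) * E r l) := by
            rw [show t + (N:ℤ) + 1 = ((i+2 : ℕ) : ℤ) by push_cast; omega]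
            exact B_eval _ _ _ (by omega)
          rw [e1, e2, e3, e4,
            show (N:ℤ)+1-t = ((l+2 : ℕ) : ℤ) by push_cast; omega,
            show (N:ℤ)+1+t = ((i+2 : ℕ) : ℤ) by push_cast; omega,
            zpow_natCast, zpow_natCast,
            show 2*N+2 = i+l+4 by omega, show 2*N+1 = i+l+3 by omega,
            show 2*N = i+l+2 by omega]
          exact B_core hr0 hr1 i l
    · -- t = N+1
      have hLv : B r (2*N+2) (t+N+1) = 1 := by
        rw [heqtop, show 2*(N:ℤ)+2 = ((2*N+2:ℕ):ℤ) by push_cast; ring]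
        exact B_self hr0.le hr1 _
      have hv2 : B r (2*N) (t+N) = 0 := B_gt (by push_cast; omega)
      have hv3 : B r (2*N) (t+N+1) = 0 := B_gt (by push_cast; omega)
      have hv4 : B r (2*N) (t+N-1) = 1 := by
        rw [show t+(N:ℤ)-1 = ((2*N:ℕ):ℤ) by push_cast; omega]
        exact B_self hr0.le hr1 _
      rw [hLv, hv2, hv3, hv4, show (N:ℤ)+1-t = 0 by omega, zpow_zero]
      ring
    · rw [B_gt (show ((2*N+2:ℕ):ℤ) < t+N+1 by push_cast; omega),
        B_gt (show ((2*N:ℕ):ℤ) < t+N by push_cast; omega),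
        B_gt (show ((2*N:ℕ):ℤ) < t+N-1 by push_cast; omega),
        B_gt (show ((2*N:ℕ):ℤ) < t+N+1 by push_cast; omega)]
      ring

end JTP

namespace JTP
variable {r : ℝ}

lemma E_le_one (hr0 : 0 ≤ r) (hr1 : r < 1) (n : ℕ) : E r n ≤ 1 :=
  Finset.prod_le_one (fun j _ => (factor_pos hr0 hr1 j).le)
    (fun j _ => by have := pow_nonneg hr0 (j + 1); linarith)

lemma E_anti (hr0 : 0 ≤ r) (hr1 : r < 1) : Antitone (E r) := by
  apply antitone_nat_of_succ_le
  intro n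
  rw [E_succ]
  nlinarith [E_pos hr0 hr1 n, factor_pos hr0 hr1 n, pow_nonneg hr0 (n + 1)]

lemma summable_log (hr0 : 0 < r) (hr1 : r < 1) :
    Summable fun n : ℕ => Real.log (1 - r ^ (n + 1)) := by
  have h1r : 0 < 1 - r := by linarith
  apply Summable.of_norm
  have key : ∀ n : ℕ, ‖Real.log (1 - r ^ (n + 1))‖ ≤ (1 - r)⁻¹ * r ^ (n + 1) := by
    intro n
    have hfp := factor_pos hr0.le hr1 n
    have hle : r ^ (n + 1) ≤ r := by
      calc r ^ (n + 1) ≤ r ^ 1 := pow_le_pow_of_le_one hr0.le hr1.le (by omega)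
      _ = r := pow_one r
    have hlog : Real.log (1 - r ^ (n + 1)) ≤ 0 :=
      Real.log_nonpos (by positivity) (by nlinarith [pow_nonneg hr0.le (n + 1)])
    rw [Real.norm_eq_abs, abs_of_nonpos hlog, ← Real.log_inv]
    have h2 : Real.log (1 - r ^ (n + 1))⁻¹ ≤ (1 - r ^ (n + 1))⁻¹ - 1 :=
      Real.log_le_sub_one_of_pos (inv_pos.mpr hfp)
    have h3 : (1 - r ^ (n + 1))⁻¹ - 1 = r ^ (n + 1) / (1 - r ^ (n + 1)) := by
      field_simp
      ring
    have h4 : r ^ (n + 1) / (1 - r ^ (n + 1)) ≤ r ^ (n + 1) / (1 - r) := by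
      apply div_le_div_of_nonneg_left (pow_nonneg hr0.le _) h1r
      nlinarith
    rw [div_eq_inv_mul, div_eq_inv_mul] at h4
    rw [div_eq_inv_mul] at h3
    linarith
  apply Summable.of_nonneg_of_le (fun n => norm_nonneg _) key
  have hg : Summable fun n : ℕ => (1 - r)⁻¹ * r * r ^ n :=
    (summable_geometric_of_lt_one hr0.le hr1).mul_left _
  exact hg.congr fun n => by ring

def Einf (r : ℝ) : ℝ := ∏' n : ℕ, (1 - r ^ (n + 1))

lemma hasProd_E (hr0 : 0 < r) (hr1 : r < 1) :
    HasProd (fun n : ℕ => 1 - r ^ (n + 1)) (Einf r) :=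
  (Real.multipliable_of_summable_log (fun n => factor_pos hr0.le hr1 n)
    (summable_log hr0 hr1)).hasProd

lemma tendsto_E (hr0 : 0 < r) (hr1 : r < 1) :
    Tendsto (E r) atTop (𝓝 (Einf r)) :=
  (hasProd_E hr0 hr1).tendsto_prod_nat

lemma Einf_pos (hr0 : 0 < r) (hr1 : r < 1) : 0 < Einf r := by
  rw [Einf, ← Real.rexp_tsum_eq_tprod (fun n => factor_pos hr0.le hr1 n) (summable_log hr0 hr1)]
  exact Real.exp_pos _

lemma Einf_le_E (hr0 : 0 < r) (hr1 : r < 1) (n : ℕ) : Einf r ≤ E r n :=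
  le_of_tendsto (tendsto_E hr0 hr1)
    (eventually_atTop.mpr ⟨n, fun _ hm => E_anti hr0.le hr1 hm⟩)


end JTP

namespace JTP
section C
variable (q : ℝ)

/-- coefficient of `x^t` (centered) in the partial product, nome `q`. -/
def c (q : ℝ) (N : ℕ) (t : ℤ) : ℝ := B (q^2) (2*N) (t+N)

variable {q}

lemma c_supp (N : ℕ) {t : ℤ} (ht : t ∉ Finset.Icc (-(N:ℤ)) (N:ℤ)) : c q N t = 0 := by
  rw [Finset.mem_Icc, not_and_or] at ht
  rcases ht with h | h
  · exact B_neg (by omega)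
  · exact B_gt (by push_cast; omega)

lemma summable_c (hq0 : 0 < q) (N : ℕ) (x : ℂ) :
    Summable (fun t : ℤ => (c q N t : ℂ) * (q:ℂ)^(t^2) * x^t) := by
  apply summable_of_ne_finset_zero (s := Finset.Icc (-(N:ℤ)) (N:ℤ))
  intro t ht
  rw [c_supp N ht]
  simp

lemma finite_id (hq0 : 0 < q) (hq1 : q < 1) (x : ℂ) (hx : x ≠ 0) (N : ℕ) :
    ∏ j ∈ Finset.range N, ((1 + x * (q:ℂ)^(2*j+1)) * (1 + x⁻¹ * (q:ℂ)^(2*j+1)))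
      = ∑' t : ℤ, (c q N t : ℂ) * (q:ℂ)^(t^2) * x^t := by
  have hr0 : (0:ℝ) < q^2 := by positivity
  have hr1 : q^2 < 1 := by nlinarith
  have hqc : (q:ℂ) ≠ 0 := by exact_mod_cast hq0.ne'
  induction N with
  | zero =>
    rw [Finset.prod_range_zero]
    rw [tsum_eq_single 0 ?_]
    · simp [c, B_zero_left hr0.le hr1]
    · intro t ht
      have : c q 0 t = 0 := by
        unfold c
        rcases lt_trichotomy t 0 with h | h | h
        · exact B_neg (by omega)
        · exact absurd h ht
        · exact B_gt (by simpa using h)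
      rw [this]; simp
  | succ N ih =>
    set f : ℤ → ℂ := fun t => (c q N t : ℂ) * (q:ℂ)^(t^2) * x^t with hf
    have hS : Summable f := summable_c hq0 N x
    have key : ∀ t : ℤ, ((c q (N+1) t : ℝ):ℂ)
        = (1+(q:ℂ)^(4*N+2)) * ((c q N t : ℝ):ℂ)
          + ((q:ℂ)^(2*N+1) * (q:ℂ)^(1-2*t)) * ((c q N (t-1) : ℝ):ℂ)
          + ((q:ℂ)^(2*N+1) * (q:ℂ)^(1+2*t)) * ((c q N (t+1) : ℝ):ℂ) := by
      intro t
      have hstep := B_step hr0 hr1 N t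
      have harg1 : t - 1 + (N:ℤ) = t + N - 1 := by ring
      have harg2 : t + 1 + (N:ℤ) = t + N + 1 := by ring
      have hc1 : c q (N+1) t = B (q^2) (2*N+2) (t+N+1) := by
        unfold c
        rw [show 2*(N+1) = 2*N+2 by omega, show t + ((N+1:ℕ):ℤ) = t + N + 1 by push_cast; ring]
      rw [hc1, hstep]
      unfold c
      rw [harg1, harg2]
      push_cast [Complex.ofReal_zpow]
      have z1 : ((q:ℂ)^2)^((N:ℤ)+1-t) = (q:ℂ)^(2*N+1) * (q:ℂ)^(1-2*t) := by
        rw [← zpow_natCast (q:ℂ) 2, ← zpow_mul, ← zpow_natCast (q:ℂ) (2*N+1),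
          ← zpow_add₀ hqc]
        congr 1
        push_cast
        ring
      have z2 : ((q:ℂ)^2)^((N:ℤ)+1+t) = (q:ℂ)^(2*N+1) * (q:ℂ)^(1+2*t) := by
        rw [← zpow_natCast (q:ℂ) 2, ← zpow_mul, ← zpow_natCast (q:ℂ) (2*N+1),
          ← zpow_add₀ hqc]
        congr 1
        push_cast
        ring
      have z3 : ((q:ℂ)^2)^(2*N+1) = (q:ℂ)^(4*N+2) := by
        rw [← pow_mul]
        congr 1
        ring
      rw [z1, z2, z3]
    have main : ∀ t : ℤ, (c q (N+1) t : ℂ)*(q:ℂ)^(t^2)*x^t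
        = (1+(q:ℂ)^(4*N+2)) * f t
          + ((q:ℂ)^(2*N+1) * x) * f (t-1)
          + ((q:ℂ)^(2*N+1) * x⁻¹) * f (t+1) := by
      intro t
      rw [key t]
      simp only [hf]
      have e1 : (q:ℂ)^((t-1)^2) = (q:ℂ)^(t^2) * (q:ℂ)^(1-2*t) := by
        rw [← zpow_add₀ hqc]; congr 1; ring
      have e2 : (q:ℂ)^((t+1)^2) = (q:ℂ)^(t^2) * (q:ℂ)^(1+2*t) := by
        rw [← zpow_add₀ hqc]; congr 1; ring
      have e3 : x^(t-1) = x^t * x⁻¹ := by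
        rw [zpow_sub₀ hx, zpow_one, div_eq_mul_inv]
      have e4 : x^(t+1) = x^t * x := by
        rw [zpow_add₀ hx, zpow_one]
      rw [e1, e2, e3, e4]
      field_simp
    have hu : ∏ j ∈ Finset.range (N+1), ((1 + x * (q:ℂ)^(2*j+1)) * (1 + x⁻¹ * (q:ℂ)^(2*j+1)))
        = (∑' t, f t) * ((1 + x * (q:ℂ)^(2*N+1)) * (1 + x⁻¹ * (q:ℂ)^(2*N+1))) := by
      rw [Finset.prod_range_succ, ih]
    rw [hu]
    have hS1 : Summable (fun t => (1+(q:ℂ)^(4*N+2)) * f t) := hS.mul_left _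
    have hSm : Summable (fun t : ℤ => f (t-1)) :=
      ((Equiv.subRight (1:ℤ)).summable_iff (f := f)).mpr hS
    have hSp : Summable (fun t : ℤ => f (t+1)) :=
      ((Equiv.addRight (1:ℤ)).summable_iff (f := f)).mpr hS
    have hS2 : Summable (fun t : ℤ => ((q:ℂ)^(2*N+1) * x) * f (t-1)) := hSm.mul_left _
    have hS3 : Summable (fun t : ℤ => ((q:ℂ)^(2*N+1) * x⁻¹) * f (t+1)) := hSp.mul_left _
    have expand : (∑' t, f t) * ((1 + x * (q:ℂ)^(2*N+1)) * (1 + x⁻¹ * (q:ℂ)^(2*N+1)))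
        = (1+(q:ℂ)^(4*N+2)) * (∑' t, f t) + ((q:ℂ)^(2*N+1) * x) * (∑' t, f t)
          + ((q:ℂ)^(2*N+1) * x⁻¹) * (∑' t, f t) := by
      have hxx : x * x⁻¹ = 1 := mul_inv_cancel₀ hx
      field_simp
      ring
    rw [expand]
    have sh1 : (∑' t, f t) = ∑' t : ℤ, f (t-1) :=
      ((Equiv.subRight (1:ℤ)).tsum_eq (f := f)).symm
    have sh2 : (∑' t, f t) = ∑' t : ℤ, f (t+1) :=
      ((Equiv.addRight (1:ℤ)).tsum_eq (f := f)).symm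
    calc (1+(q:ℂ)^(4*N+2)) * (∑' t, f t) + ((q:ℂ)^(2*N+1) * x) * (∑' t, f t)
          + ((q:ℂ)^(2*N+1) * x⁻¹) * (∑' t, f t)
        = (∑' t, (1+(q:ℂ)^(4*N+2)) * f t) + (∑' t : ℤ, ((q:ℂ)^(2*N+1) * x) * f (t-1))
          + (∑' t : ℤ, ((q:ℂ)^(2*N+1) * x⁻¹) * f (t+1)) := by
          have t1 : (1+(q:ℂ)^(4*N+2)) * (∑' t, f t)
              = ∑' t, (1+(q:ℂ)^(4*N+2)) * f t := tsum_mul_left.symm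
          have t2 : ((q:ℂ)^(2*N+1) * x) * (∑' t, f t)
              = ∑' t : ℤ, ((q:ℂ)^(2*N+1) * x) * f (t-1) := by
            rw [sh1]; exact tsum_mul_left.symm
          have t3 : ((q:ℂ)^(2*N+1) * x⁻¹) * (∑' t, f t)
              = ∑' t : ℤ, ((q:ℂ)^(2*N+1) * x⁻¹) * f (t+1) := by
            rw [sh2]; exact tsum_mul_left.symm
          rw [t1, t2, t3]
      _ = ∑' t : ℤ, ((1+(q:ℂ)^(4*N+2)) * f t + ((q:ℂ)^(2*N+1) * x) * f (t-1)
            + ((q:ℂ)^(2*N+1) * x⁻¹) * f (t+1)) := by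
          rw [Summable.tsum_add (hS1.add hS2) hS3, Summable.tsum_add hS1 hS2]
      _ = ∑' t : ℤ, (c q (N+1) t : ℂ) * (q:ℂ)^(t^2) * x^t :=
          tsum_congr fun t => (main t).symm

end C
end JTP

section PartD
namespace JTP
open Real Filter Finset Topology

variable {q : ℝ}

lemma B_le (hr0 : 0 < r) (hr1 : r < 1) (m : ℕ) (t : ℤ) :
    B r m t ≤ ((Einf r) * (Einf r))⁻¹ := by
  have hEi := Einf_pos hr0 hr1
  rw [B]
  split
  · rw [← one_div]
    apply div_le_div₀ (by norm_num) (E_le_one hr0.le hr1 m) (by positivity)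
    exact mul_le_mul (Einf_le_E hr0 hr1 _) (Einf_le_E hr0 hr1 _) hEi.le
      (E_pos hr0.le hr1 _).le
  · positivity

lemma c_le (hq0 : 0 < q) (hq1 : q < 1) (N : ℕ) (t : ℤ) :
    c q N t ≤ ((Einf (q^2)) * (Einf (q^2)))⁻¹ :=
  B_le (by positivity) (by nlinarith) _ _

lemma c_nonneg (hq0 : 0 < q) (hq1 : q < 1) (N : ℕ) (t : ℤ) : 0 ≤ c q N t :=
  B_nonneg (by positivity) (by nlinarith) _ _

lemma tendsto_two_mul : Tendsto (fun N : ℕ => 2*N) atTop atTop :=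
  tendsto_atTop_mono (fun n => by simp only [id_eq]; omega) tendsto_id

lemma tendsto_toNat (t : ℤ) : Tendsto (fun N : ℕ => ((N:ℤ)+t).toNat) atTop atTop :=
  tendsto_atTop_mono (fun n => by omega)
    (tendsto_sub_atTop_nat t.natAbs)

lemma c_tendsto (hq0 : 0 < q) (hq1 : q < 1) (t : ℤ) :
    Tendsto (fun N => E (q^2) N * c q N t) atTop (𝓝 1) := by
  set r := q^2 with hr
  have hr0 : (0:ℝ) < r := by positivity
  have hr1 : r < 1 := by nlinarith
  have hEi := Einf_pos hr0 hr1
  have heq : ∀ N : ℕ, t.natAbs ≤ N →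
      E r N * c q N t
        = E r N * E r (2*N) / (E r (((N:ℤ)+t).toNat) * E r (((N:ℤ)-t).toNat)) := by
    intro N hN
    have h1 : c q N t = E r (2*N) / (E r (((N:ℤ)+t).toNat) * E r (((N:ℤ)-t).toNat)) := by
      unfold c
      rw [show t + (N:ℤ) = ((((N:ℤ)+t).toNat : ℕ) : ℤ) by omega]
      exact B_eval _ _ _ (by omega)
    rw [h1]
    ring
  have hlim : Tendsto
      (fun N => E r N * E r (2*N) / (E r (((N:ℤ)+t).toNat) * E r (((N:ℤ)-t).toNat)))
      atTop (𝓝 (Einf r * Einf r / (Einf r * Einf r))) := by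
    apply Tendsto.div
    · exact (tendsto_E hr0 hr1).mul ((tendsto_E hr0 hr1).comp tendsto_two_mul)
    · exact ((tendsto_E hr0 hr1).comp (tendsto_toNat t)).mul
        ((tendsto_E hr0 hr1).comp (tendsto_toNat (-t)))
    · positivity
  rw [div_self (by positivity : Einf r * Einf r ≠ 0)] at hlim
  apply hlim.congr'
  filter_upwards [eventually_ge_atTop t.natAbs] with N hN
  · have := heq N hN
    rw [show ((N:ℤ) - t).toNat = ((N:ℤ) + -t).toNat by omega] at this
    exact this.symm

/-- Tannery's theorem applied to our sums. -/
lemma sum_tendsto (hq0 : 0 < q) (hq1 : q < 1) (x : ℂ) (hxq : ‖x‖ = q) :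
    Tendsto (fun N => ∑' t : ℤ, ((E (q^2) N : ℝ):ℂ) * ((c q N t : ℂ) * (q:ℂ)^(t^2) * x^t))
      atTop (𝓝 (∑' t : ℤ, (q:ℂ)^(t^2) * x^t)) := by
  set r := q^2 with hr
  have hr0 : (0:ℝ) < r := by positivity
  have hr1 : r < 1 := by nlinarith
  have hEi := Einf_pos hr0 hr1
  set C : ℝ := ((Einf r) * (Einf r))⁻¹ with hC
  -- summable bound
  have hhalf : Summable (fun n : ℕ => C * q ^ (n^2+n)) := by
    apply Summable.mul_left
    apply Summable.of_nonneg_of_le (fun n => by positivity)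
      (fun n => pow_le_pow_of_le_one hq0.le hq1.le (by nlinarith : n ≤ n^2+n))
    exact summable_geometric_of_lt_one hq0.le hq1
  have hbound_sum : Summable (fun t : ℤ => C * q ^ (t^2+t)) := by
    have h1 : Summable (fun n : ℕ => C * q ^ (((n:ℤ)^2+(n:ℤ)))) := by
      apply hhalf.congr
      intro n
      rw [show ((n:ℤ)^2+(n:ℤ)) = ((n^2+n : ℕ) : ℤ) by push_cast; ring, zpow_natCast]
    have h2 : Summable (fun n : ℕ => C * q ^ (((-((n:ℤ)+1))^2 + -((n:ℤ)+1)))) := by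
      apply hhalf.congr
      intro n
      rw [show ((-((n:ℤ)+1))^2 + -((n:ℤ)+1)) = ((n^2+n : ℕ) : ℤ) by push_cast; ring,
        zpow_natCast]
    exact (HasSum.of_nat_of_neg_add_one (f := fun t : ℤ => C * q ^ (t^2+t))
      h1.hasSum h2.hasSum).summable
  apply tendsto_tsum_of_dominated_convergence (bound := fun t : ℤ => C * q ^ (t^2+t)) hbound_sum
  · -- pointwise convergence
    intro t
    have h1 : Tendsto (fun N => ((E r N * c q N t : ℝ) : ℂ)) atTop (𝓝 1) := by
      have := (Complex.continuous_ofReal.tendsto 1).comp (c_tendsto hq0 hq1 t)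
      simpa [Function.comp_def] using this
    have h2 := h1.mul_const ((q:ℂ)^(t^2) * x^t)
    rw [one_mul] at h2
    apply h2.congr
    intro N
    push_cast
    ring
  · -- uniform bound
    filter_upwards with N
    intro t
    have hnorm : ‖((E r N : ℝ):ℂ) * ((c q N t : ℂ) * (q:ℂ)^(t^2) * x^t)‖
        = (E r N * c q N t) * (q ^ (t^2) * q ^ t) := by
      rw [norm_mul, norm_mul, norm_mul, norm_zpow, norm_zpow, hxq]
      rw [Complex.norm_real, Complex.norm_real, Complex.norm_real,
        Real.norm_eq_abs, Real.norm_eq_abs, Real.norm_eq_abs]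
      rw [abs_of_nonneg (E_pos hr0.le hr1 N).le,
        abs_of_nonneg (c_nonneg hq0 hq1 N t), abs_of_nonneg hq0.le]
      ring
    rw [hnorm, ← zpow_add₀ hq0.ne' (t^2) t]
    have hE1 : E r N * c q N t ≤ 1 * C :=
      mul_le_mul (E_le_one hr0.le hr1 N) (c_le hq0 hq1 N t)
        (c_nonneg hq0 hq1 N t) zero_le_one
    rw [one_mul] at hE1
    have hq2 : (0:ℝ) < q ^ (t^2+t) := zpow_pos hq0 _
    exact mul_le_mul_of_nonneg_right hE1 hq2.le |>.trans (le_of_eq rfl)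

end JTP
end PartD
section PartE
namespace JTP
open Real Filter Finset Topology Complex

lemma exp_diff (θ : ℝ) :
    Complex.exp (θ*I) - (Complex.exp (θ*I))⁻¹ = (2*I) * ((Real.sin θ : ℝ):ℂ) := by
  rw [← Complex.exp_neg, Complex.ofReal_sin, Complex.sin,
    show -((θ:ℂ)*I) = -θ*I by ring]
  linear_combination (Complex.exp ((θ:ℂ)*I) - Complex.exp (-(θ:ℂ)*I)) * Complex.I_sq

lemma exp_sum (θ : ℝ) :
    Complex.exp (θ*I) + (Complex.exp (θ*I))⁻¹ = 2 * ((Real.cos θ : ℝ):ℂ) := by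
  rw [← Complex.exp_neg, Complex.ofReal_cos, Complex.cos,
    show -((θ:ℂ)*I) = -θ*I by ring]
  ring

lemma wpow (z : ℝ) (k : ℕ) :
    Complex.exp (z*I) ^ k = Complex.exp (((k*z : ℝ))*I) := by
  rw [← Complex.exp_nat_mul]
  congr 1
  push_cast
  ring

end JTP
end PartE

section PartE2
namespace JTP
open Real Filter Finset Topology Complex

variable {q : ℝ}

/-- positivity of the product factors -/
lemma g_pos (hq0 : 0 < q) (hq1 : q < 1) (z : ℝ) (n : ℕ) :
    0 < (1 - q ^ (2*(n+1))) * (1 - 2*q^(2*(n+1))*Real.cos (2*z) + q^(4*(n+1))) := by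
  have ha0 : 0 < q ^ (2*(n+1)) := by positivity
  have ha1 : q ^ (2*(n+1)) < 1 := pow_lt_one₀ hq0.le hq1 (by omega)
  have hsq : (q ^ (2*(n+1)))^2 = q^(4*(n+1)) := by rw [← pow_mul]; congr 1; ring
  have hc1 := Real.cos_le_one (2*z)
  have hc2 := Real.neg_one_le_cos (2*z)
  have h2 : 0 < 1 - 2*q^(2*(n+1))*Real.cos (2*z) + q^(4*(n+1)) := by
    nlinarith [sq_nonneg (1 - q ^ (2*(n+1)))]
  nlinarith

lemma g_log_summable (hq0 : 0 < q) (hq1 : q < 1) (z : ℝ) :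
    Summable fun n : ℕ => Real.log
      ((1 - q ^ (2*(n+1))) * (1 - 2*q^(2*(n+1))*Real.cos (2*z) + q^(4*(n+1)))) := by
  have hr0 : (0:ℝ) < q^2 := by positivity
  have hr1 : q^2 < 1 := by nlinarith
  have hf1pos : ∀ n : ℕ, 0 < 1 - q ^ (2*(n+1)) := fun n => by
    have : q ^ (2*(n+1)) < 1 := pow_lt_one₀ hq0.le hq1 (by omega)
    linarith
  have hf2pos : ∀ n : ℕ, 0 < 1 - 2*q^(2*(n+1))*Real.cos (2*z) + q^(4*(n+1)) := fun n => by
    have ha0 : 0 < q ^ (2*(n+1)) := by positivity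
    have hsq : (q ^ (2*(n+1)))^2 = q^(4*(n+1)) := by rw [← pow_mul]; congr 1; ring
    have hc1 := Real.cos_le_one (2*z)
    have hc2 := Real.neg_one_le_cos (2*z)
    nlinarith [sq_nonneg (1 - q ^ (2*(n+1))), hf1pos n]
  have hS1 : Summable fun n : ℕ => Real.log (1 - q ^ (2*(n+1))) := by
    apply (summable_log hr0 hr1).congr
    intro n
    rw [← pow_mul]
  have hS2 : Summable fun n : ℕ =>
      Real.log (1 - 2*q^(2*(n+1))*Real.cos (2*z) + q^(4*(n+1))) := by
    apply Summable.of_norm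
    have key : ∀ n : ℕ, ‖Real.log (1 - 2*q^(2*(n+1))*Real.cos (2*z) + q^(4*(n+1)))‖
        ≤ 2 * (1-q^2)⁻¹ * ((q^2) * (q^2)^n) := by
      intro n
      set a : ℝ := q ^ (2*(n+1)) with hadef
      have haq : a = (q^2)^(n+1) := by rw [hadef, ← pow_mul]
      have ha0 : 0 < a := by rw [hadef]; positivity
      have ha2 : a ≤ q^2 := by
        rw [haq]
        calc (q^2)^(n+1) ≤ (q^2)^1 := pow_le_pow_of_le_one hr0.le hr1.le (by omega)
        _ = q^2 := pow_one _
      have ha1 : a < 1 := lt_of_le_of_lt ha2 hr1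
      have hsq : a^2 = q^(4*(n+1)) := by rw [hadef, ← pow_mul]; congr 1; ring
      have hc1 := Real.cos_le_one (2*z)
      have hc2 := Real.neg_one_le_cos (2*z)
      set s : ℝ := 1 - 2*q^(2*(n+1))*Real.cos (2*z) + q^(4*(n+1)) with hsdef
      have hs_lo : (1-a)^2 ≤ s := by rw [hsdef, ← hadef, ← hsq]; nlinarith
      have hs_hi : s ≤ (1+a)^2 := by rw [hsdef, ← hadef, ← hsq]; nlinarith
      have hs_pos : 0 < s := lt_of_lt_of_le (by nlinarith) hs_lo
      have h1a : 0 < 1 - a := by linarith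
      have hub : Real.log s ≤ 2 * a := by
        calc Real.log s ≤ Real.log ((1+a)^2) :=
              Real.log_le_log hs_pos hs_hi
        _ = 2 * Real.log (1+a) := by rw [Real.log_pow]; push_cast; ring
        _ ≤ 2 * a := by
              have := Real.log_le_sub_one_of_pos (by linarith : (0:ℝ) < 1 + a)
              linarith
      have hlb : -(2 * (a / (1-a))) ≤ Real.log s := by
        have h1 : Real.log ((1-a)^2) ≤ Real.log s := Real.log_le_log (by positivity) hs_lo
        have h2 : Real.log ((1-a)^2) = 2 * Real.log (1-a) := by
          rw [Real.log_pow]; push_cast; ring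
        have h3 : Real.log (1-a)⁻¹ ≤ (1-a)⁻¹ - 1 :=
          Real.log_le_sub_one_of_pos (by positivity)
        have h4 : (1-a)⁻¹ - 1 = a / (1-a) := by field_simp; ring
        have h6 : Real.log (1-a)⁻¹ = - Real.log (1-a) := Real.log_inv _
        rw [h6] at h3
        linarith
      have hfrac : a / (1-a) ≤ a / (1-q^2) := by
        apply div_le_div_of_nonneg_left ha0.le (by linarith)
        linarith
      have habs : ‖Real.log s‖ ≤ 2 * (a / (1-q^2)) := by
        rw [Real.norm_eq_abs, abs_le]
        constructor
        · have : a/(1-a) ≥ 0 := by positivity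
          nlinarith [hlb, hfrac]
        · have : a ≤ a / (1-q^2) := by
            rw [le_div_iff₀ (by linarith)]
            nlinarith
          linarith
      calc ‖Real.log s‖ ≤ 2 * (a / (1-q^2)) := habs
      _ = 2 * (1-q^2)⁻¹ * a := by ring
      _ = 2 * (1-q^2)⁻¹ * ((q^2) * (q^2)^n) := by
            rw [haq]; ring_nf
    apply Summable.of_nonneg_of_le (fun n => norm_nonneg _) key
    exact ((summable_geometric_of_lt_one hr0.le hr1).mul_left _).mul_left _
  exact (hS1.add hS2).congr fun n => by
    rw [← Real.log_mul (hf1pos n).ne' (hf2pos n).ne']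

end JTP
end PartE2

section PartE3
namespace JTP
open Real Filter Finset Topology Complex

lemma tel (A Cc : ℕ → ℂ) (N : ℕ) :
    (∏ j ∈ Finset.range N, (A j * Cc j)) * Cc N
      = Cc 0 * ∏ j ∈ Finset.range N, (A j * Cc (j+1)) := by
  induction N with
  | zero => simp
  | succ n ih =>
    rw [Finset.prod_range_succ, Finset.prod_range_succ]
    calc (∏ j ∈ Finset.range n, (A j * Cc j)) * (A n * Cc n) * Cc (n+1)
        = ((∏ j ∈ Finset.range n, (A j * Cc j)) * Cc n) * (A n * Cc (n+1)) := by ring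
      _ = Cc 0 * (∏ j ∈ Finset.range n, (A j * Cc (j+1))) * (A n * Cc (n+1)) := by rw [ih]
      _ = Cc 0 * ((∏ j ∈ Finset.range n, (A j * Cc (j+1))) * (A n * Cc (n+1))) := by ring

lemma key_identity (q : ℝ) (hq0 : 0 < q) (hq1 : q < 1) (z : ℝ) :
    (∑' n : ℕ, (-1)^n * q^(n^2+n) * Real.sin ((2*(n:ℝ)+1)*z))
      = Real.sin z * ∏' n : ℕ, ((1 - q ^ (2*(n+1)))
          * (1 - 2*q^(2*(n+1))*Real.cos (2*z) + q^(4*(n+1)))) := by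
  have hqc : (q:ℂ) ≠ 0 := by exact_mod_cast hq0.ne'
  have hr0 : (0:ℝ) < q^2 := by positivity
  have hr1 : q^2 < 1 := by nlinarith
  set w : ℂ := Complex.exp (z*I) with hwdef
  have hw0 : w ≠ 0 := Complex.exp_ne_zero _
  have hwn : ‖w‖ = 1 := by
    rw [hwdef, Complex.norm_exp_ofReal_mul_I]
  set v : ℂ := w^2 with hvdef
  have hv0 : v ≠ 0 := pow_ne_zero 2 hw0
  set x : ℂ := -((q:ℂ) * v) with hxdef
  have hx0 : x ≠ 0 := by
    rw [hxdef]; exact neg_ne_zero.mpr (mul_ne_zero hqc hv0)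
  have hxq : ‖x‖ = q := by
    rw [hxdef, norm_neg, norm_mul, hvdef, norm_pow, hwn, Complex.norm_real,
      Real.norm_eq_abs, _root_.abs_of_nonneg hq0.le]
    norm_num
  -- the real product
  set g : ℕ → ℝ := fun n => (1 - q ^ (2*(n+1)))
      * (1 - 2*q^(2*(n+1))*Real.cos (2*z) + q^(4*(n+1))) with hgdef
  set P : ℝ := ∏' n : ℕ, g n with hPdef
  have hHP : HasProd g P :=
    (Real.multipliable_of_summable_log (fun n => g_pos hq0 hq1 z n)
      (g_log_summable hq0 hq1 z)).hasProd
  have hHPc : HasProd (fun n => ((g n : ℝ):ℂ)) ((P:ℝ):ℂ) :=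
    hHP.map Complex.ofRealHom Complex.continuous_ofReal
  have tendstoP : Tendsto (fun N => ∏ j ∈ range N, ((g j : ℝ):ℂ)) atTop (𝓝 ((P:ℝ):ℂ)) :=
    hHPc.tendsto_prod_nat
  -- complex factor functions
  set A : ℕ → ℂ := fun j => (1 - (q:ℂ)^(2*j+2)) * (1 - v*(q:ℂ)^(2*j+2)) with hAdef
  set Cc : ℕ → ℂ := fun j => 1 - v⁻¹*(q:ℂ)^(2*j) with hCdef
  have hv2 : v = Complex.exp ((2*z:ℝ)*I) := by
    rw [hvdef, hwdef, wpow z 2]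
    norm_num
  have hcos : ((Real.cos (2*z) : ℝ):ℂ) = (v + v⁻¹)/2 := by
    have := exp_sum (2*z)
    rw [← hv2] at this
    rw [eq_div_iff (two_ne_zero : (2:ℂ) ≠ 0)]
    linear_combination -this
  have hH : ∀ j : ℕ, ((g j : ℝ):ℂ) = A j * Cc (j+1) := by
    intro j
    have hcos2 : Complex.cos (2*(z:ℂ)) = (v + v⁻¹)/2 := by
      rw [show (2*(z:ℂ)) = ((2*z : ℝ):ℂ) by push_cast; ring, ← Complex.ofReal_cos]
      exact hcos
    rw [hgdef, hAdef, hCdef]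
    push_cast
    rw [hcos2]
    field_simp
    ring
  have hxinv : x⁻¹ = -((q:ℂ)⁻¹ * v⁻¹) := by
    rw [hxdef]
    field_simp
  have hG : ∀ j : ℕ, (1 - (q:ℂ)^(2*j+2))
      * ((1 + x*(q:ℂ)^(2*j+1)) * (1 + x⁻¹*(q:ℂ)^(2*j+1))) = A j * Cc j := by
    intro j
    rw [hAdef, hCdef, hxdef, hxinv]
    simp only []
    have hp1 : (q:ℂ)^(2*j+1) = (q:ℂ)^(2*j) * (q:ℂ) := pow_succ _ _
    have hp2 : (q:ℂ)^(2*j+2) = (q:ℂ)^(2*j) * (q:ℂ)^2 := by rw [← pow_add]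
    rw [hp1, hp2]
    field_simp
    ring
  have htel : ∀ N : ℕ, (∏ j ∈ range N, (A j * Cc j)) * Cc N
      = Cc 0 * ∏ j ∈ range N, ((g j : ℝ):ℂ) := by
    intro N
    rw [tel A Cc N]
    congr 1
    exact prod_congr rfl fun j _ => (hH j).symm
  have hm : ∀ N : ℕ, ((E (q^2) N : ℝ):ℂ) = ∏ j ∈ range N, (1 - (q:ℂ)^(2*j+2)) := by
    intro N
    rw [E, Complex.ofReal_prod]
    apply prod_congr rfl
    intro j _
    push_cast
    rw [← pow_mul]
    ring
  set S : ℂ := ∑' t : ℤ, (q:ℂ)^(t^2) * x^t with hSdef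
  have L1 : Tendsto (fun N => ((E (q^2) N : ℝ):ℂ)
      * ∏ j ∈ range N, ((1 + x*(q:ℂ)^(2*j+1)) * (1 + x⁻¹*(q:ℂ)^(2*j+1)))) atTop (𝓝 S) := by
    apply (sum_tendsto hq0 hq1 x hxq).congr
    intro N
    rw [tsum_mul_left, ← finite_id hq0 hq1 x hx0 N]
  have L2 : Tendsto (fun N => ∏ j ∈ range N, (A j * Cc j)) atTop (𝓝 S) := by
    apply L1.congr
    intro N
    rw [hm N, ← prod_mul_distrib]
    exact prod_congr rfl fun j _ => hG j
  have L3 : Tendsto Cc atTop (𝓝 1) := by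
    have hq2 : ‖(q:ℂ)^2‖ < 1 := by
      rw [norm_pow, Complex.norm_real, Real.norm_eq_abs, _root_.abs_of_nonneg hq0.le]
      nlinarith
    have h0 : Tendsto (fun N : ℕ => ((q:ℂ)^2)^N) atTop (𝓝 0) :=
      tendsto_pow_atTop_nhds_zero_of_norm_lt_one hq2
    have h1 : Tendsto (fun N : ℕ => 1 - v⁻¹ * ((q:ℂ)^2)^N) atTop (𝓝 (1 - v⁻¹ * 0)) :=
      tendsto_const_nhds.sub (h0.const_mul v⁻¹)
    rw [mul_zero, sub_zero] at h1
    apply h1.congr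
    intro N
    rw [hCdef]
    simp only [← pow_mul]
  have L4 : Tendsto (fun N => (∏ j ∈ range N, (A j * Cc j)) * Cc N) atTop (𝓝 (S * 1)) :=
    L2.mul L3
  have L5 : Tendsto (fun N => (∏ j ∈ range N, (A j * Cc j)) * Cc N)
      atTop (𝓝 (Cc 0 * ((P:ℝ):ℂ))) := by
    apply Tendsto.congr _ ((tendstoP.const_mul (Cc 0)))
    intro N
    exact (htel N).symm
  have hSP : S = Cc 0 * ((P:ℝ):ℂ) := by
    have := tendsto_nhds_unique L4 L5
    rwa [mul_one] at this
  -- LHS sum manipulation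
  set F : ℤ → ℂ := fun t => (-1)^t * (q:ℂ)^(t^2+t) * w^(2*t+1) with hFdef
  have hwS : w * S = ∑' t : ℤ, F t := by
    rw [hSdef, ← tsum_mul_left]
    apply tsum_congr
    intro t
    rw [hFdef]
    have hxt : x^t = (-1:ℂ)^t * ((q:ℂ)^t * v^t) := by
      rw [hxdef, show -((q:ℂ)*v) = (-1) * ((q:ℂ)*v) by ring, mul_zpow, mul_zpow]
    have hvt : v^t = w^(2*t) := by
      rw [hvdef, ← zpow_natCast w 2, ← zpow_mul]
      norm_num
    have hq' : (q:ℂ)^(t^2) * (q:ℂ)^t = (q:ℂ)^(t^2+t) := (zpow_add₀ hqc _ _).symm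
    have hw' : w^(2*t) * w = w^(2*t+1) := (zpow_add_one₀ hw0 _).symm
    rw [hxt, hvt]
    calc w * ((q:ℂ)^(t^2) * ((-1:ℂ)^t * ((q:ℂ)^t * w^(2*t))))
        = (-1:ℂ)^t * ((q:ℂ)^(t^2) * (q:ℂ)^t) * (w^(2*t) * w) := by ring
      _ = (-1:ℂ)^t * (q:ℂ)^(t^2+t) * w^(2*t+1) := by rw [hq', hw']
  have hnormF : ∀ n : ℕ, ‖F (n:ℤ)‖ = q^(n^2+n) := by
    intro n
    rw [hFdef]
    simp only [norm_mul, norm_zpow, norm_neg, norm_one, one_zpow, hwn,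
      Complex.norm_real, Real.norm_eq_abs, _root_.abs_of_nonneg hq0.le]
    rw [show ((n:ℤ)^2+(n:ℤ)) = ((n^2+n : ℕ) : ℤ) by push_cast; ring, zpow_natCast]
    ring
  have hnormF' : ∀ n : ℕ, ‖F (-((n:ℤ)+1))‖ = q^(n^2+n) := by
    intro n
    rw [hFdef]
    simp only [norm_mul, norm_zpow, norm_neg, norm_one, one_zpow, hwn,
      Complex.norm_real, Real.norm_eq_abs, _root_.abs_of_nonneg hq0.le]
    rw [show ((-((n:ℤ)+1))^2+(-((n:ℤ)+1))) = ((n^2+n : ℕ) : ℤ) by push_cast; ring,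
      zpow_natCast]
    ring
  have hsummand : Summable (fun n : ℕ => q^(n^2+n)) := by
    apply Summable.of_nonneg_of_le (fun n => by positivity)
      (fun n => pow_le_pow_of_le_one hq0.le hq1.le (by nlinarith : n ≤ n^2+n))
    exact summable_geometric_of_lt_one hq0.le hq1
  have hs1 : Summable (fun n : ℕ => F (n:ℤ)) := by
    apply Summable.of_norm
    exact hsummand.congr fun n => (hnormF n).symm
  have hs2 : Summable (fun n : ℕ => F (-((n:ℤ)+1))) := by
    apply Summable.of_norm
    exact hsummand.congr fun n => (hnormF' n).symm
  have hFsum : HasSum F ((∑' n : ℕ, F (n:ℤ)) + ∑' n : ℕ, F (-((n:ℤ)+1))) :=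
    HasSum.of_nat_of_neg_add_one hs1.hasSum hs2.hasSum
  have hsplit : ∑' t : ℤ, F t = ∑' n : ℕ, (F (n:ℤ) + F (-((n:ℤ)+1))) := by
    rw [hFsum.tsum_eq, Summable.tsum_add hs1 hs2]
  have hpair : ∀ n : ℕ, F (n:ℤ) + F (-((n:ℤ)+1))
      = (2*I) * ((((-1)^n * q^(n^2+n) * Real.sin ((2*(n:ℝ)+1)*z) : ℝ)):ℂ) := by
    intro n
    have e1 : F (n:ℤ) = (-1:ℂ)^n * (q:ℂ)^(n^2+n) * w^(2*n+1) := by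
      simp only [hFdef]
      rw [show ((n:ℤ)^2+(n:ℤ)) = ((n^2+n : ℕ) : ℤ) by push_cast; ring,
        show (2*(n:ℤ)+1) = ((2*n+1 : ℕ) : ℤ) by push_cast; ring,
        zpow_natCast, zpow_natCast, zpow_natCast]
    have e2 : F (-((n:ℤ)+1)) = -((-1:ℂ)^n) * (q:ℂ)^(n^2+n) * (w^(2*n+1))⁻¹ := by
      simp only [hFdef]
      rw [show ((-((n:ℤ)+1))^2+(-((n:ℤ)+1))) = ((n^2+n : ℕ) : ℤ) by push_cast; ring,
        show (2*(-((n:ℤ)+1))+1) = -((2*n+1 : ℕ) : ℤ) by push_cast; ring,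
        show (-((n:ℤ)+1)) = -(((n+1 : ℕ)) : ℤ) by push_cast; ring,
        zpow_neg, zpow_neg, zpow_natCast, zpow_natCast, zpow_natCast,
        ← inv_pow, inv_neg, inv_one, pow_succ]
      ring
    have e3 : w^(2*n+1) = Complex.exp ((((2*(n:ℝ)+1)*z : ℝ))*I) := by
      rw [hwdef, wpow z (2*n+1)]
      congr 2
      push_cast
      ring
    rw [e1, e2, e3]
    have h2 := exp_diff ((2*(n:ℝ)+1)*z)
    push_cast at h2 ⊢
    linear_combination ((-1:ℂ)^n * (q:ℂ)^(n^2+n)) * h2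
  have hsum2 : w * S = (2*I) *
      ((∑' n : ℕ, ((-1)^n * q^(n^2+n) * Real.sin ((2*(n:ℝ)+1)*z)) : ℝ):ℂ) := by
    rw [hwS, hsplit, tsum_congr hpair, tsum_mul_left, Complex.ofReal_tsum]
  have hw1 : w * Cc 0 = (2*I) * ((Real.sin z : ℝ):ℂ) := by
    have h1 : w * Cc 0 = w - w⁻¹ := by
      rw [hCdef]
      simp only [pow_zero, mul_one, hvdef]
      field_simp
      ring
    rw [h1, hwdef]
    exact exp_diff z
  have hfinal : ((∑' n : ℕ, ((-1)^n * q^(n^2+n) * Real.sin ((2*(n:ℝ)+1)*z)) : ℝ):ℂ)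
      = ((Real.sin z * P : ℝ):ℂ) := by
    have h2I : (2*I : ℂ) ≠ 0 := by simp [Complex.I_ne_zero]
    apply mul_left_cancel₀ h2I
    rw [← hsum2, hSP]
    calc w * (Cc 0 * ((P:ℝ):ℂ)) = (w * Cc 0) * ((P:ℝ):ℂ) := by ring
      _ = (2*I) * ((Real.sin z : ℝ):ℂ) * ((P:ℝ):ℂ) := by rw [hw1]
      _ = 2*I*((Real.sin z * P : ℝ):ℂ) := by push_cast; ring
  exact_mod_cast hfinal

end JTP
end PartE3


/-- Jacobi `θ₁(z,q) = 2 ∑_{n≥0} (-1)ⁿ q^{(n+1/2)²} sin((2n+1)z)` (real nome). -/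
noncomputable def theta1 (z q : ℝ) : ℝ :=
  2 * ∑' n : ℕ, (-1) ^ n * q ^ (((n : ℝ) + 1 / 2) ^ 2) * Real.sin ((2 * n + 1) * z)

theorem theta1_product (q : ℝ) (hq0 : 0 < q) (hq1 : q < 1) (z : ℝ) :
    theta1 z q =
      2 * q ^ ((1 : ℝ) / 4) * Real.sin z *
        ∏' n : ℕ, ((1 - q ^ (2 * (n + 1))) *
          (1 - 2 * q ^ (2 * (n + 1)) * Real.cos (2 * z) + q ^ (4 * (n + 1)))) := by
  have key := JTP.key_identity q hq0 hq1 z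
  rw [theta1]
  have h1 : ∀ n : ℕ, (-1:ℝ) ^ n * q ^ ((((n:ℝ) + 1 / 2) ^ 2)) * Real.sin ((2 * n + 1) * z)
      = q ^ ((1:ℝ)/4) * ((-1)^n * q^(n^2+n) * Real.sin ((2*(n:ℝ)+1)*z)) := by
    intro n
    have he : (((n:ℝ) + 1 / 2) ^ 2) = ((n^2+n : ℕ) : ℝ) + 1/4 := by push_cast; ring
    rw [he, Real.rpow_add hq0, Real.rpow_natCast]
    ring
  rw [tsum_congr h1, tsum_mul_left, key]
  ring
end
end

section
/- For |q|<1, ∑_{n∈ℤ}(−1)^n q^{n(3n−1)/2} = ∏_{n≥1}(1−q^n). -/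
open Complex Finset Filter Topology

private def tri : ℕ → ℕ
  | 0 => 0
  | n + 1 => tri n + (n + 1)

private lemma two_tri (k : ℕ) : 2 * tri k = k * (k + 1) := by
  induction k with
  | zero => rfl
  | succ n ih => simp only [tri]; linear_combination ih

noncomputable def pentA (q : ℂ) (n j : ℕ) : ℂ :=
  (-1) ^ j * q ^ (n * j + tri j) * ∏ i ∈ Finset.Ico (j + 1) (n + 1), (1 - q ^ i)

noncomputable def pentC (q : ℂ) (n j : ℕ) : ℂ :=
  (-1) ^ j * q ^ (n * j + tri j) * ∏ i ∈ Finset.Ico j (n + 1), (1 - q ^ i)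

private lemma pentC_zero (q : ℂ) (n : ℕ) : pentC q n 0 = 0 := by
  have : (∏ i ∈ Finset.range (n + 1), (1 - q ^ i)) = 0 :=
    Finset.prod_eq_zero (i := 0) (Finset.mem_range.2 (by omega)) (by simp)
  simp [pentC, this]

private lemma pentC_top (q : ℂ) (n : ℕ) :
    pentC q n (n + 1) = (-1) ^ (n + 1) * q ^ (tri n + (n + 1) ^ 2) := by
  have h : n * (n + 1) + tri (n + 1) = tri n + (n + 1) ^ 2 := by simp only [tri]; ring
  simp [pentC, h]

private lemma pentA_top (q : ℂ) (n : ℕ) :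
    pentA q (n + 1) (n + 1) = (-1) ^ (n + 1) * q ^ (tri (n + 1) + (n + 1) ^ 2) := by
  have h : (n + 1) * (n + 1) + tri (n + 1) = tri (n + 1) + (n + 1) ^ 2 := by ring
  simp [pentA, h]

private lemma pent_key (q : ℂ) (n j : ℕ) (hj : j ≤ n) :
    pentA q (n + 1) j = pentA q n j + (pentC q n (j + 1) - pentC q n j) := by
  have hprod : (∏ i ∈ Finset.Ico (j + 1) (n + 1 + 1), (1 - q ^ i))
      = (∏ i ∈ Finset.Ico (j + 1) (n + 1), (1 - q ^ i)) * (1 - q ^ (n + 1)) :=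
    Finset.prod_Ico_succ_top (by omega) _
  have hC1 : pentC q n (j + 1) = pentA q n j * (-(q ^ (n + j + 1))) := by
    have he : n * (j + 1) + tri (j + 1) = (n * j + tri j) + (n + j + 1) := by
      simp only [tri]; ring
    simp only [pentC, pentA, he, pow_add, pow_succ]
    ring
  have hC2 : pentC q n j = pentA q n j * (1 - q ^ j) := by
    have hsplit : (∏ i ∈ Finset.Ico j (n + 1), (1 - q ^ i))
        = (1 - q ^ j) * ∏ i ∈ Finset.Ico (j + 1) (n + 1), (1 - q ^ i) :=
      Finset.prod_eq_prod_Ico_succ_bot (by omega) _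
    simp only [pentC, pentA, hsplit]; ring
  have hA : pentA q (n + 1) j = pentA q n j * (q ^ j * (1 - q ^ (n + 1))) := by
    have he : (n + 1) * j + tri j = (n * j + tri j) + j := by ring
    simp only [pentA, hprod, he, pow_add]; ring
  rw [hA, hC1, hC2]; ring

private lemma shanks (q : ℂ) (n : ℕ) :
    ∑ j ∈ range (n + 1), pentA q n j
      = 1 + ∑ k ∈ range n, ((-1 : ℂ) ^ (k + 1) * q ^ (tri k + (k + 1) ^ 2)
          + (-1 : ℂ) ^ (k + 1) * q ^ (tri (k + 1) + (k + 1) ^ 2)) := by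
  induction n with
  | zero => simp [pentA, tri]
  | succ n ih =>
    have hsum : ∑ j ∈ range (n + 1 + 1), pentA q (n + 1) j
        = (∑ j ∈ range (n + 1), pentA q n j)
          + (∑ j ∈ range (n + 1), (pentC q n (j + 1) - pentC q n j))
          + pentA q (n + 1) (n + 1) := by
      rw [Finset.sum_range_succ]
      congr 1
      rw [← Finset.sum_add_distrib]
      exact Finset.sum_congr rfl fun j hj =>
        pent_key q n j (by exact Nat.lt_succ_iff.mp (Finset.mem_range.mp hj))
    have htel : ∑ j ∈ range (n + 1), (pentC q n (j + 1) - pentC q n j)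
        = pentC q n (n + 1) - pentC q n 0 := Finset.sum_range_sub _ _
    rw [hsum, htel, ih, pentC_zero, pentC_top, pentA_top, Finset.sum_range_succ]
    ring

-- exponent values
private lemma pent_exp_pos (k : ℕ) :
    ((((k : ℤ) + 1) * (3 * ((k : ℤ) + 1) - 1) / 2)).toNat = tri k + (k + 1) ^ 2 := by
  have h2 : (2 * tri k : ℤ) = (k : ℤ) * ((k : ℤ) + 1) := by exact_mod_cast two_tri k
  have hnum : ((k : ℤ) + 1) * (3 * ((k : ℤ) + 1) - 1) = 2 * ((tri k + (k + 1) ^ 2 : ℕ) : ℤ) := by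
    push_cast
    linear_combination -h2
  rw [hnum, Int.mul_ediv_cancel_left _ two_ne_zero, Int.toNat_natCast]

private lemma pent_exp_neg (k : ℕ) :
    (((-((k : ℤ) + 1)) * (3 * (-((k : ℤ) + 1)) - 1) / 2)).toNat = tri (k + 1) + (k + 1) ^ 2 := by
  have h2 : (2 * tri (k + 1) : ℤ) = ((k : ℤ) + 1) * ((k : ℤ) + 2) := by
    have := two_tri (k + 1); exact_mod_cast this
  have hnum : (-((k : ℤ) + 1)) * (3 * (-((k : ℤ) + 1)) - 1)
      = 2 * ((tri (k + 1) + (k + 1) ^ 2 : ℕ) : ℤ) := by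
    push_cast
    linear_combination -h2
  rw [hnum, Int.mul_ediv_cancel_left _ two_ne_zero, Int.toNat_natCast]

private lemma neg_one_zpow_neg (k : ℕ) : ((-1 : ℂ)) ^ (-((k : ℤ) + 1)) = (-1 : ℂ) ^ (k + 1) := by
  rw [zpow_neg, show ((k : ℤ) + 1) = ((k + 1 : ℕ) : ℤ) by push_cast; ring, zpow_natCast]
  refine inv_eq_of_mul_eq_one_left ?_
  rw [← pow_add, ← two_mul, pow_mul]
  norm_num


theorem pentagonal_number_theorem (q : ℂ) (hq : ‖q‖ < 1) :
    (∑' n : ℤ, (-1 : ℂ) ^ n * q ^ (n * (3 * n - 1) / 2).toNat) =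
      ∏' n : ℕ, (1 - q ^ (n + 1)) := by
  set r := ‖q‖ with hrdef
  have hr0 : 0 ≤ r := norm_nonneg q
  have hr1 : r < 1 := hq
  have hgeom : Summable fun n : ℕ => r ^ n := summable_geometric_of_lt_one hr0 hr1
  set f : ℤ → ℂ := fun n => (-1 : ℂ) ^ n * q ^ (n * (3 * n - 1) / 2).toNat with hfdef
  -- special values of f
  have hf0 : f 0 = 1 := by simp [hfdef]
  have hfpos : ∀ k : ℕ, f ((k : ℤ) + 1) = (-1 : ℂ) ^ (k + 1) * q ^ (tri k + (k + 1) ^ 2) := by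
    intro k
    simp only [hfdef]
    rw [pent_exp_pos, show ((k : ℤ) + 1) = ((k + 1 : ℕ) : ℤ) by push_cast; ring, zpow_natCast]
  have hfneg : ∀ k : ℕ,
      f (-((k : ℤ) + 1)) = (-1 : ℂ) ^ (k + 1) * q ^ (tri (k + 1) + (k + 1) ^ 2) := by
    intro k
    simp only [hfdef]
    rw [pent_exp_neg, neg_one_zpow_neg]
  -- summability of f
  have hnormval : ∀ (m : ℕ) (k : ℕ), ‖(-1 : ℂ) ^ (k + 1) * q ^ m‖ = r ^ m := by
    intro m k
    rw [norm_mul, norm_pow, norm_pow, norm_neg, norm_one, one_pow, one_mul]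
  have hexple : ∀ k : ℕ, (k : ℕ) ≤ tri k + (k + 1) ^ 2 := by
    intro k
    nlinarith [tri k, sq_nonneg (k : ℤ)]
  have hsum_pos : Summable fun k : ℕ => f (k : ℤ) := by
    rw [← summable_nat_add_iff 1]
    apply Summable.of_norm_bounded hgeom
    intro k
    have hcast : ((k + 1 : ℕ) : ℤ) = (k : ℤ) + 1 := by push_cast; ring
    rw [hcast, hfpos k, hnormval _ k]
    exact pow_le_pow_of_le_one hr0 hr1.le (hexple k)
  have hsum_neg : Summable fun k : ℕ => f (-((k : ℤ) + 1)) := by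
    apply Summable.of_norm_bounded hgeom
    intro k
    rw [hfneg k, hnormval _ k]
    refine pow_le_pow_of_le_one hr0 hr1.le ?_
    have := hexple k
    simp only [tri]
    omega
  have hsummable : Summable f := Summable.of_nat_of_neg_add_one hsum_pos hsum_neg
  have hS : HasSum f (∑' n : ℤ, f n) := hsummable.hasSum
  -- partial sums over Icc (-n) n
  have hIccsum : ∀ n : ℕ, ∑ j ∈ Finset.Icc (-(n : ℤ)) (n : ℤ), f j
      = 1 + ∑ k ∈ range n, (f ((k : ℤ) + 1) + f (-((k : ℤ) + 1))) := by
    intro n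
    induction n with
    | zero => simpa using hf0
    | succ n ih =>
      have hcast : ((n + 1 : ℕ) : ℤ) = (n : ℤ) + 1 := by push_cast; ring
      have hins : Finset.Icc (-((n : ℤ) + 1)) ((n : ℤ) + 1)
          = insert (-((n : ℤ) + 1)) (insert ((n : ℤ) + 1) (Finset.Icc (-(n : ℤ)) (n : ℤ))) := by
        ext x
        simp only [Finset.mem_Icc, Finset.mem_insert]
        omega
      rw [hcast, hins, Finset.sum_insert (by simp only [Finset.mem_Icc, Finset.mem_insert]; omega),
        Finset.sum_insert (by simp only [Finset.mem_Icc]; omega), ih, Finset.sum_range_succ]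
      ring
  have hIcc : ∀ n : ℕ, ∑ j ∈ Finset.Icc (-(n : ℤ)) (n : ℤ), f j
      = ∑ j ∈ range (n + 1), pentA q n j := by
    intro n
    rw [hIccsum n, shanks q n]
    congr 1
    refine Finset.sum_congr rfl fun k _ => ?_
    rw [hfpos k, hfneg k]
  -- the Icc partial sums tend to the tsum
  have hmono : Monotone fun n : ℕ => Finset.Icc (-(n : ℤ)) (n : ℤ) := by
    intro a b hab
    exact Finset.Icc_subset_Icc (neg_le_neg (by exact_mod_cast hab)) (by exact_mod_cast hab)
  have htendIcc : Tendsto (fun n : ℕ => Finset.Icc (-(n : ℤ)) (n : ℤ)) atTop atTop :=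
    tendsto_atTop_finset_of_monotone hmono
      (fun x => ⟨x.natAbs, by simp only [Finset.mem_Icc]; omega⟩)
  have hLS : Tendsto (fun n : ℕ => ∑ j ∈ Finset.Icc (-(n : ℤ)) (n : ℤ), f j) atTop
      (𝓝 (∑' n : ℤ, f n)) := by
    have hS' : Tendsto (fun s : Finset ℤ => ∑ i ∈ s, f i) atTop (𝓝 (∑' n : ℤ, f n)) := hS
    exact hS'.comp htendIcc
  -- the product side
  have hqpow_lt : ∀ n : ℕ, ‖q ^ (n + 1)‖ < 1 := by
    intro n
    rw [norm_pow]
    exact pow_lt_one₀ hr0 hr1 (Nat.succ_ne_zero n)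
  have hne : ∀ n : ℕ, (1 : ℂ) - q ^ (n + 1) ≠ 0 := by
    intro n h
    have h1 : q ^ (n + 1) = 1 := by linear_combination -h
    have := hqpow_lt n
    rw [h1] at this
    simp at this
  have hlog : Summable fun n : ℕ => Complex.log (1 - q ^ (n + 1)) := by
    apply Summable.of_norm_bounded (hgeom.mul_left ((1 - r)⁻¹ + 1))
    intro n
    have hz : ‖-(q ^ (n + 1))‖ < 1 := by simpa using hqpow_lt n
    have hb := Complex.norm_log_one_add_le hz
    rw [show (1 : ℂ) - q ^ (n + 1) = 1 + -(q ^ (n + 1)) by ring]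
    refine hb.trans ?_
    rw [norm_neg, norm_pow, ← hrdef]
    have h1 : r ^ (n + 1) ≤ r ^ n := pow_le_pow_of_le_one hr0 hr1.le (by omega)
    have h2 : r ^ (n + 1) ≤ r := pow_le_pow_of_le_one hr0 hr1.le (by omega) |>.trans_eq (pow_one r)
    have h3 : 0 < 1 - r := by linarith
    have h4 : (1 - r ^ (n + 1))⁻¹ ≤ (1 - r)⁻¹ := by
      apply inv_anti₀ h3
      linarith
    have h5 : 0 ≤ r ^ (n + 1) := pow_nonneg hr0 _
    have h6 : (0 : ℝ) < (1 - r)⁻¹ := inv_pos.mpr h3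
    have hs1 : r ^ (n + 1) ≤ 1 := h2.trans hr1.le
    have e0 : (r ^ (n + 1)) ^ 2 ≤ r ^ n := by nlinarith
    have e1 : (r ^ (n + 1)) ^ 2 * (1 - r ^ (n + 1))⁻¹ ≤ r ^ n * (1 - r)⁻¹ :=
      mul_le_mul e0 h4 (inv_nonneg.2 (by nlinarith)) (pow_nonneg hr0 n)
    nlinarith [pow_nonneg hr0 n]
  have hmult : Multipliable fun n : ℕ => (1 : ℂ) - q ^ (n + 1) :=
    Complex.multipliable_of_summable_log hlog
  have hPP : Tendsto (fun n : ℕ => ∏ i ∈ range n, ((1 : ℂ) - q ^ (i + 1))) atTop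
      (𝓝 (∏' n : ℕ, ((1 : ℂ) - q ^ (n + 1)))) := hmult.hasProd.tendsto_prod_nat
  -- pentA q n 0 is the partial product
  have hA0 : ∀ n : ℕ, pentA q n 0 = ∏ i ∈ range n, ((1 : ℂ) - q ^ (i + 1)) := by
    intro n
    simp only [pentA, pow_zero, Nat.mul_zero, tri, one_mul, Nat.add_zero, Nat.zero_add]
    rw [Finset.prod_Ico_eq_prod_range]
    simp only [Nat.add_sub_cancel]
    exact Finset.prod_congr rfl fun i _ => by rw [add_comm 1 i]
  -- the error term tends to 0
  have hK : ∀ n : ℕ, ∀ j ∈ Finset.Ico 1 (n + 1),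
      ‖pentA q n j‖ ≤ Real.exp ((1 - r)⁻¹) * r ^ n := by
    intro n j hj
    rw [Finset.mem_Ico] at hj
    have hq1 : ‖(-1 : ℂ) ^ j * q ^ (n * j + tri j)‖ = r ^ (n * j + tri j) := by
      rw [norm_mul, norm_pow, norm_pow, norm_neg, norm_one, one_pow, one_mul]
    have hexp : n ≤ n * j + tri j := by
      have : n * 1 ≤ n * j := Nat.mul_le_mul_left n hj.1
      omega
    have hqle : r ^ (n * j + tri j) ≤ r ^ n := pow_le_pow_of_le_one hr0 hr1.le hexp
    have hprodle : ‖∏ i ∈ Finset.Ico (j + 1) (n + 1), ((1 : ℂ) - q ^ i)‖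
        ≤ Real.exp ((1 - r)⁻¹) := by
      rw [norm_prod]
      calc ∏ i ∈ Finset.Ico (j + 1) (n + 1), ‖(1 : ℂ) - q ^ i‖
          ≤ ∏ i ∈ Finset.Ico (j + 1) (n + 1), (1 + r ^ i) :=
            Finset.prod_le_prod (fun i _ => norm_nonneg _)
              (fun i _ => (norm_sub_le _ _).trans (by rw [norm_one, norm_pow]))
        _ ≤ ∏ i ∈ Finset.Ico (j + 1) (n + 1), Real.exp (r ^ i) :=
            Finset.prod_le_prod (fun i _ => by positivity)
              (fun i _ => by rw [add_comm]; exact Real.add_one_le_exp _)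
        _ = Real.exp (∑ i ∈ Finset.Ico (j + 1) (n + 1), r ^ i) := (Real.exp_sum _ _).symm
        _ ≤ Real.exp ((1 - r)⁻¹) := by
            apply Real.exp_le_exp.2
            refine (Summable.sum_le_tsum _ (fun i _ => pow_nonneg hr0 i) hgeom).trans_eq ?_
            exact tsum_geometric_of_lt_one hr0 hr1
    calc ‖pentA q n j‖ = ‖(-1 : ℂ) ^ j * q ^ (n * j + tri j)‖
          * ‖∏ i ∈ Finset.Ico (j + 1) (n + 1), ((1 : ℂ) - q ^ i)‖ := by
            rw [pentA, norm_mul]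
      _ ≤ r ^ n * Real.exp ((1 - r)⁻¹) := by
            rw [hq1]
            exact mul_le_mul hqle hprodle (norm_nonneg _) (pow_nonneg hr0 n)
      _ = Real.exp ((1 - r)⁻¹) * r ^ n := mul_comm _ _
  have hE : Tendsto (fun n : ℕ => ∑ j ∈ Finset.Ico 1 (n + 1), pentA q n j) atTop (𝓝 0) := by
    apply squeeze_zero_norm
      (a := fun n : ℕ => (n : ℝ) * (Real.exp ((1 - r)⁻¹) * r ^ n))
    · intro n
      refine (norm_sum_le _ _).trans ?_
      have := Finset.sum_le_card_nsmul (Finset.Ico 1 (n + 1)) (fun j => ‖pentA q n j‖)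
        (Real.exp ((1 - r)⁻¹) * r ^ n) (hK n)
      rw [Nat.card_Ico] at this
      simpa [nsmul_eq_mul] using this
    · have h := (tendsto_pow_const_mul_const_pow_of_abs_lt_one 1
        (by rwa [_root_.abs_of_nonneg hr0] : |r| < 1)).const_mul (Real.exp ((1 - r)⁻¹))
      rw [mul_zero] at h
      refine h.congr fun n => ?_
      ring
  -- combine
  have hRA : ∀ n : ℕ, ∑ j ∈ range (n + 1), pentA q n j
      = pentA q n 0 + ∑ j ∈ Finset.Ico 1 (n + 1), pentA q n j := by
    intro n
    rw [Finset.range_eq_Ico, Finset.sum_eq_sum_Ico_succ_bot (by omega)]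
  have hRtendsP : Tendsto (fun n : ℕ => ∑ j ∈ range (n + 1), pentA q n j) atTop
      (𝓝 (∏' n : ℕ, ((1 : ℂ) - q ^ (n + 1)))) := by
    have h := hPP.add hE
    rw [add_zero] at h
    refine h.congr fun n => ?_
    rw [hRA n, hA0 n]
  have hRtendsS : Tendsto (fun n : ℕ => ∑ j ∈ range (n + 1), pentA q n j) atTop
      (𝓝 (∑' n : ℤ, f n)) := hLS.congr fun n => hIcc n
  exact tendsto_nhds_unique hRtendsS hRtendsP
end
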